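/- If f : ℝ → ℝ is monotone increasing and S ⊆ ℝ is nonempty and bounded with f '' S bounded, then closure {x + f x | x ∈ S} ⊆ Set.Icc (sInf S + sInf (f '' S)) (sSup S + sSup (f '' S)), and moreover sInf (closure {x + f x | x ∈ S}) = sInf S + sInf (f '' S) and sSup (closure {x + f x | x ∈ S}) = sSup S + sSup (f '' S). -/

import Mathlib

theorem stmt19 (f : ℝ → ℝ) (hm : Monotone f) (S : Set ℝ) (hne : S.Nonempty)
    (hbdd : Bornology.IsBounded S) (hbddf : Bornology.IsBounded (f '' S)) :
    closure {y | ∃ x ∈ S, y = x + f x} ⊆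
      Set.Icc (sInf S + sInf (f '' S)) (sSup S + sSup (f '' S)) ∧
    sInf (closure {y | ∃ x ∈ S, y = x + f x}) = sInf S + sInf (f '' S) ∧
    sSup (closure {y | ∃ x ∈ S, y = x + f x}) = sSup S + sSup (f '' S) := by
  set T : Set ℝ := {y | ∃ x ∈ S, y = x + f x} with hT
  have hbS : BddBelow S := hbdd.bddBelow
  have haS : BddAbove S := hbdd.bddAbove
  have hbF : BddBelow (f '' S) := hbddf.bddBelow
  have haF : BddAbove (f '' S) := hbddf.bddAbove
  have hneF : (f '' S).Nonempty := hne.image f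
  have hTne : T.Nonempty := by
    obtain ⟨x, hx⟩ := hne
    exact ⟨x + f x, x, hx, rfl⟩
  -- lower bound
  have hlb : ∀ y ∈ T, sInf S + sInf (f '' S) ≤ y := by
    rintro y ⟨x, hx, rfl⟩
    exact add_le_add (csInf_le hbS hx) (csInf_le hbF ⟨x, hx, rfl⟩)
  have hub : ∀ y ∈ T, y ≤ sSup S + sSup (f '' S) := by
    rintro y ⟨x, hx, rfl⟩
    exact add_le_add (le_csSup haS hx) (le_csSup haF ⟨x, hx, rfl⟩)
  have hglb : IsGLB T (sInf S + sInf (f '' S)) := by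
    constructor
    · exact hlb
    · intro c hc
      refine le_of_forall_pos_le_add fun ε hε => ?_
      obtain ⟨x₁, hx₁, hlt₁⟩ := Real.lt_sInf_add_pos hne (half_pos hε)
      obtain ⟨z, ⟨x₂, hx₂, rfl⟩, hlt₂⟩ := Real.lt_sInf_add_pos hneF (half_pos hε)
      set x := min x₁ x₂ with hxdef
      have hxS : x ∈ S := by
        rcases min_cases x₁ x₂ with ⟨h, _⟩ | ⟨h, _⟩ <;> rw [hxdef, h] <;> assumption
      have : x + f x < sInf S + sInf (f '' S) + ε := by
        have h1 : x ≤ x₁ := min_le_left _ _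
        have h2 : f x ≤ f x₂ := hm (min_le_right _ _)
        calc x + f x ≤ x₁ + f x₂ := add_le_add h1 h2
          _ < (sInf S + ε / 2) + (sInf (f '' S) + ε / 2) := add_lt_add hlt₁ hlt₂
          _ = sInf S + sInf (f '' S) + ε := by ring
      exact le_trans (hc ⟨x, hxS, rfl⟩) this.le
  have hlub : IsLUB T (sSup S + sSup (f '' S)) := by
    constructor
    · exact hub
    · intro c hc
      refine le_of_forall_pos_le_add fun ε hε => ?_
      obtain ⟨x₁, hx₁, hlt₁⟩ := Real.add_neg_lt_sSup hne (neg_neg_of_pos (half_pos hε))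
      obtain ⟨z, ⟨x₂, hx₂, rfl⟩, hlt₂⟩ :=
        Real.add_neg_lt_sSup hneF (neg_neg_of_pos (half_pos hε))
      set x := max x₁ x₂ with hxdef
      have hxS : x ∈ S := by
        rcases max_cases x₁ x₂ with ⟨h, _⟩ | ⟨h, _⟩ <;> rw [hxdef, h] <;> assumption
      have : sSup S + sSup (f '' S) - ε < x + f x := by
        have h1 : x₁ ≤ x := le_max_left _ _
        have h2 : f x₂ ≤ f x := hm (le_max_right _ _)
        have e1 : sSup S + -(ε/2) < x := lt_of_lt_of_le hlt₁ h1
        have e2 : sSup (f '' S) + -(ε/2) < f x := lt_of_lt_of_le hlt₂ h2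
        nlinarith
      have hx' : sSup S + sSup (f '' S) ≤ x + f x + ε := by linarith
      exact le_trans hx' (add_le_add_left (hc ⟨x, hxS, rfl⟩) ε)
  have hglbC : IsGLB (closure T) (sInf S + sInf (f '' S)) := by
    constructor
    · intro y hy
      have hcl : closure T ⊆ Set.Ici (sInf S + sInf (f '' S)) :=
        closure_minimal hlb isClosed_Ici
      exact hcl hy
    · intro c hc
      exact hglb.2 fun y hy => hc (subset_closure hy)
  have hlubC : IsLUB (closure T) (sSup S + sSup (f '' S)) := by
    constructor
    · intro y hy
      have hcl : closure T ⊆ Set.Iic (sSup S + sSup (f '' S)) :=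
        closure_minimal hub isClosed_Iic
      exact hcl hy
    · intro c hc
      exact hlub.2 fun y hy => hc (subset_closure hy)
  have hCne : (closure T).Nonempty := hTne.closure
  refine ⟨fun y hy => ⟨hglbC.1 hy, hlubC.1 hy⟩, hglbC.csInf_eq hCne, hlubC.csSup_eq hCne⟩
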